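/- Let P be a d-dimensional polytope (with faces of all dimensions) and F a full flag of P. Then there exists a unique facet G of P such that the vertex F_0 is contained in G and the sequence (F_i ∩ G) for i = 1, ..., d is a full flag of G. Moreover G is the (d−1)-face of the flag r_{d-1} r_{d-2} ··· r_1 F. -/

import Mathlib

open RealInnerProductSpace

noncomputable section

abbrev Euc (d : ℕ) := EuclideanSpace ℝ (Fin d)

/-- A polytope is the convex hull of a finite set of points. -/
def IsPolytope {d : ℕ} (P : Set (Euc d)) : Prop :=
  ∃ V : Set (Euc d), V.Finite ∧ P = convexHull ℝ V

/-- The dimension of a subset: the rank of its vector span (direction of its affine hull). -/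
noncomputable def sdim {d : ℕ} (F : Set (Euc d)) : ℕ :=
  Module.finrank ℝ (vectorSpan ℝ F)

/-- A full flag of a `k`-dimensional polytope `P`: a chain of nonempty faces,
one in each dimension `0, …, k-1`.  For indices `≥ k` the face is `P` itself by convention. -/
structure FullFlag {d : ℕ} (P : Set (Euc d)) (k : ℕ) where
  face : ℕ → Set (Euc d)
  exposed : ∀ i < k, IsExposed ℝ P (face i)
  nonempty : ∀ i < k, (face i).Nonempty
  dim_eq : ∀ i < k, sdim (face i) = i
  chain : ∀ i j : ℕ, i < j → j < k → face i ⊆ face j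
  top : ∀ i, k ≤ i → face i = P

/-- `G` is a facet of `P` containing the vertex `F_0` such that `(F_i ∩ G)_{i ∈ [d]}`
is a full flag of `G`. -/
def FacetFlagProp {d : ℕ} (P : Set (Euc d)) (F : FullFlag P d) (G : Set (Euc d)) : Prop :=
  IsExposed ℝ P G ∧ G.Nonempty ∧ sdim G = d - 1 ∧ F.face 0 ⊆ G ∧
    ∃ FG : FullFlag G (d - 1), ∀ i < d - 1, FG.face i = F.face (i + 1) ∩ G

/-!
For `j < d` call a set `G` transverse at level `j` if it is a `j`-face of `F_{j+1}` containing
`F_0` and meeting each `F_{i+1}`, `i < j`, in an `i`-face; the facets of the theorem are the sets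
transverse at level `d - 1`. If `G` is transverse at level `j + 1`, then `F_{j+1} ∩ G` is
transverse at level `j` and `G ≠ F_{j+1}`. Conversely, if `R` is transverse at level `j` and `G`
is a facet of `F_{j+2}` through the ridge `R` other than `F_{j+1}`, then `F_{j+1} ∩ G = R`, since
two distinct facets meet in a face of smaller dimension, so `G` is transverse at level `j + 1`.
By the diamond property such a `G` exists and is unique, which gives existence and uniqueness by
induction on `j`; and the flip `r_{j+1}` replaces `F_{j+1}` by exactly this `G`, so the `j`-face of
`r_j ⋯ r_1 F` is transverse at level `j`.
-/

lemma vectorSpan_le_ker_of_forall_eq {E : Type*} [AddCommGroup E] [Module ℝ E] {X : Set E}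
    {l : E →ₗ[ℝ] ℝ} {c : ℝ} (h : ∀ x ∈ X, l x = c) :
    vectorSpan ℝ X ≤ LinearMap.ker l := by
  rw [vectorSpan_def, Submodule.span_le]
  rintro _ ⟨x, hx, y, hy, rfl⟩
  simp [h x hx, h y hy]

lemma IsExposed.eq_setOf_eq {E : Type*} [AddCommGroup E] [TopologicalSpace E] [Module ℝ E]
    {P X : Set E} (hX : IsExposed ℝ P X) {x₀ : E} (hx₀ : x₀ ∈ X) :
    ∃ l : E →L[ℝ] ℝ, (∀ y ∈ P, l y ≤ l x₀) ∧ X = {x ∈ P | l x = l x₀} := by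
  obtain ⟨l, rfl⟩ := hX ⟨x₀, hx₀⟩
  refine ⟨l, hx₀.2, Set.ext fun x => ⟨fun hx => ?_, fun hx => ?_⟩⟩
  · exact ⟨hx.1, le_antisymm (hx₀.2 x hx.1) (hx.2 x₀ hx₀.1)⟩
  · exact ⟨hx.1, fun y hy => (hx₀.2 y hy).trans hx.2.ge⟩

-- Rotate `m` about the hyperplane `l = l x₀` until it first touches a point of `V` below it.
lemma exists_tilt_eq_max {α : Type*} {V : Set α} (hV : V.Finite) (l m : α → ℝ) {x₀ : α}
    (hl : ∀ v ∈ V, l v ≤ l x₀) (hm : ∀ v ∈ V, l v = l x₀ → m v ≤ m x₀)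
    (hlt : ∃ v ∈ V, l v < l x₀) :
    ∃ T : ℝ, ∃ w ∈ V, l w < l x₀ ∧ m w + T * l w = m x₀ + T * l x₀ ∧
      ∀ v ∈ V, m v + T * l v ≤ m x₀ + T * l x₀ := by
  set slope : α → ℝ := fun v => (m v - m x₀) / (l x₀ - l v)
  obtain ⟨w, ⟨hwV, hwl⟩, hw⟩ := Set.exists_max_image {v ∈ V | l v < l x₀} slope
    (hV.subset (Set.sep_subset _ _)) hlt
  have hwl' : 0 < l x₀ - l w := sub_pos.2 hwl
  refine ⟨slope w, w, hwV, hwl, ?_, fun v hv => ?_⟩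
  · have := div_mul_cancel₀ (m w - m x₀) hwl'.ne'
    linarith
  · rcases (hl v hv).lt_or_eq with hvl | hvl
    · have := (div_le_iff₀ (sub_pos.2 hvl)).1 (hw v ⟨hv, hvl⟩)
      linarith
    · rw [hvl]
      linarith [hm v hv hvl]

lemma exists_ne_zero_sum_mul_eq_zero {K V : Type*} [Field K] [AddCommGroup V] [Module K V]
    [FiniteDimensional K V] {A W : Submodule K V} (hAW : A ≤ W)
    (hdim : Module.finrank K A + 2 = Module.finrank K W) (φ : Fin 3 → Module.Dual K V)
    (hφ : ∀ i, A ≤ LinearMap.ker (φ i)) :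
    ∃ c : Fin 3 → K, c ≠ 0 ∧ ∀ w ∈ W, ∑ i, c i * φ i w = 0 := by
  set A' : Submodule K W := A.comap W.subtype
  have hA' : Module.finrank K A' = Module.finrank K A :=
    (Submodule.comapSubtypeEquivOfLe hAW).finrank_eq
  have hann : Module.finrank K A'.dualAnnihilator = 2 := by
    have := Subspace.finrank_add_finrank_dualAnnihilator_eq A'
    omega
  let ψ : Fin 3 → A'.dualAnnihilator := fun i =>
    ⟨(φ i).domRestrict W, (Submodule.mem_dualAnnihilator _).2 fun w hw => hφ i hw⟩
  have hdep : ¬ LinearIndependent K ψ := fun hli => by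
    simpa [hann] using hli.fintype_card_le_finrank
  obtain ⟨c, hc, i, hi⟩ := (Fintype.not_linearIndependent_iff (R := K) (v := ψ)).1 hdep
  refine ⟨c, Function.ne_iff.2 ⟨i, hi⟩, fun w hw => ?_⟩
  simpa [ψ] using LinearMap.congr_fun (congrArg Subtype.val hc) ⟨w, hw⟩

lemma mul_neg_or_eq_zero_of_linear_relations {b c u v u' v' : ℝ} (h : b * u + c * v = 0)
    (h' : b * u' + c * v' = 0) (hu : u < 0) (hv : v ≤ 0) (hv' : v' < 0) :
    b * c < 0 ∨ b = 0 ∧ c = 0 := by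
  rcases lt_trichotomy b 0 with hb | rfl | hb
  · have : 0 < c := by nlinarith
    exact Or.inl (by nlinarith)
  · exact Or.inr ⟨rfl, by nlinarith⟩
  · have : c < 0 := by nlinarith
    exact Or.inl (by nlinarith)

lemma eq_zero_of_pairwise_mul_neg_or_eq_zero {a b c : ℝ} (hab : a * b < 0 ∨ a = 0 ∧ b = 0)
    (hbc : b * c < 0 ∨ b = 0 ∧ c = 0) (hac : a * c < 0 ∨ a = 0 ∧ c = 0) :
    a = 0 ∧ b = 0 ∧ c = 0 := by
  rcases hab with hab | ⟨rfl, rfl⟩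
  · rcases hbc with hbc | ⟨rfl, rfl⟩
    · rcases hac with hac | ⟨rfl, rfl⟩
      · nlinarith [mul_pos_of_neg_of_neg hab hbc, sq_nonneg b]
      · simp at hab
    · simp at hab
  · simpa using hac

-- Otherwise, evaluating the relation at witnesses of the non-inclusions shows that any two
-- coefficients have opposite signs or both vanish.
lemma exists_ne_zeroSet_subset {E : Type*} {P : Set E} {g : Fin 3 → E → ℝ}
    (hg : ∀ i, ∀ x ∈ P, g i x ≤ 0) {c : Fin 3 → ℝ} (hc : c ≠ 0)
    (hrel : ∀ x ∈ P, ∑ i, c i * g i x = 0) :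
    ∃ i j, i ≠ j ∧ {x ∈ P | g i x = 0} ⊆ {x ∈ P | g j x = 0} := by
  by_contra! h
  have hwit : ∀ i j, i ≠ j → ∃ x ∈ P, g i x = 0 ∧ g j x < 0 := fun i j hij => by
    obtain ⟨x, ⟨hxP, hx⟩, hxj⟩ := Set.not_subset.1 (h i j hij)
    exact ⟨x, hxP, hx, (hg j x hxP).lt_of_ne fun h => hxj ⟨hxP, h⟩⟩
  choose p hpP hp hpneg using hwit
  have hrel' : ∀ i j (hij : i ≠ j),
      c 0 * g 0 (p i j hij) + c 1 * g 1 (p i j hij) + c 2 * g 2 (p i j hij) = 0 :=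
    fun i j hij => by simpa [Fin.sum_univ_three] using hrel _ (hpP i j hij)
  have h12 := mul_neg_or_eq_zero_of_linear_relations
    (by simpa [hp] using hrel' 0 1 (by decide)) (by simpa [hp] using hrel' 0 2 (by decide))
    (hpneg 0 1 _) (hg 2 _ (hpP 0 1 _)) (hpneg 0 2 _)
  have h02 := mul_neg_or_eq_zero_of_linear_relations
    (by simpa [hp] using hrel' 1 0 (by decide)) (by simpa [hp] using hrel' 1 2 (by decide))
    (hpneg 1 0 _) (hg 2 _ (hpP 1 0 _)) (hpneg 1 2 _)
  have h01 := mul_neg_or_eq_zero_of_linear_relations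
    (by simpa [hp] using hrel' 2 0 (by decide)) (by simpa [hp] using hrel' 2 1 (by decide))
    (hpneg 2 0 _) (hg 1 _ (hpP 2 0 _)) (hpneg 2 1 _)
  obtain ⟨h0, h1, h2⟩ := eq_zero_of_pairwise_mul_neg_or_eq_zero h01 h12 h02
  exact hc (funext fun i => by fin_cases i <;> assumption)

section Dimension

variable {d : ℕ}

lemma Set.Subsingleton.of_sdim_eq_zero {X : Set (Euc d)} (h : sdim X = 0) : X.Subsingleton := by
  rw [sdim, Submodule.finrank_eq_zero] at h
  intro x hx y hy
  simpa [h, sub_eq_zero] using vsub_mem_vectorSpan ℝ hx hy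

lemma sdim_lt_of_forall_eq {X Y : Set (Euc d)} (hXY : X ⊆ Y) (l : Euc d →L[ℝ] ℝ)
    {x y : Euc d} (hx : x ∈ X) (hy : y ∈ Y) (hl : ∀ z ∈ X, l z = l x) (hly : l y ≠ l x) :
    sdim X < sdim Y := by
  refine Submodule.finrank_lt_finrank_of_lt
    (lt_of_le_of_ne (vectorSpan_mono ℝ hXY) fun h => hly ?_)
  have := vectorSpan_le_ker_of_forall_eq (l := (l : Euc d →ₗ[ℝ] ℝ)) hl
    (h ▸ vsub_mem_vectorSpan ℝ hy (hXY hx))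
  simpa [sub_eq_zero] using this

lemma IsExposed.sdim_lt {P X : Set (Euc d)} (hX : IsExposed ℝ P X) (hne : X.Nonempty)
    (hXP : X ≠ P) : sdim X < sdim P := by
  obtain ⟨x₀, hx₀⟩ := hne
  obtain ⟨l, hl, hX_eq⟩ := hX.eq_setOf_eq hx₀
  obtain ⟨y, hyP, hyX⟩ := Set.exists_of_ssubset (hX.subset.ssubset_of_ne hXP)
  refine sdim_lt_of_forall_eq hX.subset l hx₀ hyP (fun z hz => (hX_eq ▸ hz).2) fun h => ?_
  exact hyX (hX_eq ▸ ⟨hyP, h⟩)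

lemma IsExposed.eq_of_sdim_eq {P X : Set (Euc d)} (hX : IsExposed ℝ P X) (hne : X.Nonempty)
    (h : sdim X = sdim P) : X = P := by
  by_contra hXP
  exact (hX.sdim_lt hne hXP).ne h

lemma IsExposed.inter_eq_of_ne {Q X Y R : Set (Euc d)} (hX : IsExposed ℝ Q X)
    (hY : IsExposed ℝ Q Y) (hXY : X ≠ Y) (hdim : sdim X = sdim Y) (hR : IsExposed ℝ X R)
    (hRne : R.Nonempty) (hRY : R ⊆ Y) (hRdim : sdim R + 1 = sdim X) : X ∩ Y = R := by
  have hXYX : X ∩ Y ≠ X := fun h =>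
    hXY ((hX.mono hY.subset (h ▸ Set.inter_subset_right)).eq_of_sdim_eq
      (hRne.mono hR.subset) hdim)
  have hlt := ((hX.inter hY).mono hX.subset Set.inter_subset_left).sdim_lt
    (hRne.mono (Set.subset_inter hR.subset hRY)) hXYX
  by_contra hne
  have := (hR.mono Set.inter_subset_left (Set.subset_inter hR.subset hRY)).sdim_lt hRne
    (Ne.symm hne)
  omega

end Dimension

lemma IsPolytope.of_isExposed {d : ℕ} {P X : Set (Euc d)} (hP : IsPolytope P)
    (hX : IsExposed ℝ P X) : IsPolytope X := by
  obtain ⟨V, hV, rfl⟩ := hP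
  have hfin : (X.extremePoints ℝ).Finite := hV.subset
    (hX.isExtreme.extremePoints_subset_extremePoints.trans extremePoints_convexHull_subset)
  refine ⟨_, hfin, ?_⟩
  calc X = closure (convexHull ℝ (X.extremePoints ℝ)) :=
        (closure_convexHull_extremePoints (hX.isCompact (hV.isCompact_convexHull ℝ))
          (hX.convex (convex_convexHull ℝ V))).symm
    _ = convexHull ℝ (X.extremePoints ℝ) := (hfin.isCompact_convexHull ℝ).isClosed.closure_eq

lemma exists_tilt_isMaxOn_convexHull {E : Type*} [AddCommGroup E] [Module ℝ E] {V : Set E}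
    (hV : V.Finite) (l m : E →ₗ[ℝ] ℝ) {x₀ : E}
    (hl : ∀ y ∈ convexHull ℝ V, l y ≤ l x₀)
    (hm : ∀ y ∈ convexHull ℝ V, l y = l x₀ → m y ≤ m x₀)
    (hlt : ∃ y ∈ convexHull ℝ V, l y < l x₀) :
    ∃ T : ℝ, ∃ w ∈ V, l w < l x₀ ∧ (m + T • l) w = (m + T • l) x₀ ∧
      ∀ y ∈ convexHull ℝ V, (m + T • l) y ≤ (m + T • l) x₀ := by
  have hlt' : ∃ v ∈ V, l v < l x₀ := by
    by_contra! h
    obtain ⟨y, hy, hly⟩ := hlt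
    exact hly.not_ge (convexHull_min h (convex_halfSpace_ge l.isLinear (l x₀)) hy)
  obtain ⟨T, w, hwV, hwl, hw, hT⟩ := exists_tilt_eq_max hV l m
    (fun v hv => hl v (subset_convexHull ℝ V hv))
    (fun v hv => hm v (subset_convexHull ℝ V hv)) hlt'
  exact ⟨T, w, hwV, hwl, hw, fun y hy =>
    convexHull_min hT (convex_halfSpace_le (m + T • l).isLinear _) hy⟩

lemma exists_isExposed_ne_of_ridge {d : ℕ} {P F R : Set (Euc d)} (hP : IsPolytope P)
    (hF : IsExposed ℝ P F) (hR : IsExposed ℝ F R) (hRne : R.Nonempty)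
    (hRF : sdim R + 1 = sdim F) (hFP : sdim F + 1 = sdim P) :
    ∃ G, IsExposed ℝ P G ∧ sdim G = sdim F ∧ R ⊆ G ∧ G ≠ F := by
  obtain ⟨V, hV, hPV⟩ := hP
  obtain ⟨x₀, hx₀⟩ := hRne
  have hx₀P : x₀ ∈ P := hF.subset (hR.subset hx₀)
  obtain ⟨l, hl, hF_eq⟩ := hF.eq_setOf_eq (hR.subset hx₀)
  obtain ⟨m, hm, hR_eq⟩ := hR.eq_setOf_eq hx₀
  have hmemF : ∀ {x}, x ∈ F ↔ x ∈ P ∧ l x = l x₀ := by rw [hF_eq]; rfl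
  have hmemR : ∀ {x}, x ∈ R ↔ x ∈ F ∧ m x = m x₀ := by rw [hR_eq]; rfl
  obtain ⟨z, hzP, hzF⟩ := Set.exists_of_ssubset
    (hF.subset.ssubset_of_ne fun h => by rw [h] at hFP; omega)
  subst hPV
  obtain ⟨T, w, hwV, hwl, hw, hT⟩ := exists_tilt_isMaxOn_convexHull hV l m hl
    (fun y hy hly => hm y (hmemF.2 ⟨hy, hly⟩))
    ⟨z, hzP, (hl z hzP).lt_of_ne fun h => hzF (hmemF.2 ⟨hzP, h⟩)⟩
  set n : Euc d →L[ℝ] ℝ := m + T • l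
  have hn : ∀ x, n x = m x + T * l x := fun x => rfl
  set G := n.toExposed (convexHull ℝ V)
  have hG : IsExposed ℝ (convexHull ℝ V) G := ContinuousLinearMap.toExposed.isExposed
  have hmemG : ∀ {x}, x ∈ G ↔ x ∈ convexHull ℝ V ∧ n x = n x₀ :=
    ⟨fun hx => ⟨hx.1, le_antisymm (hT _ hx.1) (hx.2 x₀ hx₀P)⟩,
      fun hx => ⟨hx.1, fun y hy => (hT y hy).trans hx.2.ge⟩⟩
  have hRG : R ⊆ G := fun x hx => by
    obtain ⟨hxF, hmx⟩ := hmemR.1 hx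
    exact hmemG.2 ⟨hF.subset hxF, by rw [hn, hn, hmx, (hmemF.1 hxF).2]⟩
  have hwG : w ∈ G := hmemG.2 ⟨subset_convexHull ℝ V hwV, hw⟩
  obtain ⟨y, hyF, hyR⟩ := Set.exists_of_ssubset
    (hR.subset.ssubset_of_ne fun h => by rw [h] at hRF; omega)
  have hyG : y ∉ G := fun hy => by
    have hmy : m y < m x₀ := (hm y hyF).lt_of_ne fun h => hyR (hmemR.2 ⟨hyF, h⟩)
    have := (hmemG.1 hy).2
    rw [hn, hn, (hmemF.1 hyF).2] at this
    linarith
  have hGP := hG.sdim_lt ⟨x₀, hRG hx₀⟩ fun h => hyG (h ▸ hF.subset hyF)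
  have hRG_dim := sdim_lt_of_forall_eq hRG l hx₀ hwG
    (fun z hz => (hmemF.1 (hmemR.1 hz).1).2) hwl.ne
  refine ⟨G, hG, by omega, hRG, fun h => ?_⟩
  exact hwl.ne (hmemF.1 (h ▸ hwG)).2

-- The functionals exposing the `F i` vanish on the direction of `R`, which has codimension two in
-- that of `P`, so they are linearly dependent there.
lemma not_injective_of_ridge_subset {d : ℕ} {P R : Set (Euc d)} {F : Fin 3 → Set (Euc d)}
    (hF : ∀ i, IsExposed ℝ P (F i)) (hFdim : ∀ i, sdim (F i) + 1 = sdim P)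
    (hRne : R.Nonempty) (hRF : ∀ i, R ⊆ F i) (hRdim : sdim R + 2 = sdim P) :
    ¬ Function.Injective F := by
  obtain ⟨x₀, hx₀⟩ := hRne
  have hx₀P : x₀ ∈ P := (hF 0).subset (hRF 0 hx₀)
  choose m hm hF_eq using fun i => (hF i).eq_setOf_eq (hRF i hx₀)
  obtain ⟨c, hc, hrel⟩ := exists_ne_zero_sum_mul_eq_zero
    (vectorSpan_mono ℝ ((hRF 0).trans (hF 0).subset)) hRdim
    (fun i => (m i : Euc d →ₗ[ℝ] ℝ))
    fun i => vectorSpan_le_ker_of_forall_eq fun x hx => (hF_eq i ▸ hRF i hx).2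
  have hzero : ∀ i, {x ∈ P | m i x - m i x₀ = 0} = F i := fun i => by
    simp [hF_eq i, sub_eq_zero]
  obtain ⟨i, j, hij, hsub⟩ := exists_ne_zeroSet_subset (g := fun i x => m i x - m i x₀)
    (fun i x hx => sub_nonpos.2 (hm i x hx)) hc fun x hx => by
      simpa [mul_sub] using hrel (x - x₀) (vsub_mem_vectorSpan ℝ hx hx₀P)
  rw [hzero, hzero] at hsub
  refine fun hinj => hij (hinj ?_)
  refine ((hF i).mono (hF j).subset hsub).eq_of_sdim_eq ⟨x₀, hRF i hx₀⟩ ?_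
  have := hFdim i
  have := hFdim j
  omega

namespace FullFlag

variable {d k : ℕ} {P : Set (Euc d)} (F : FullFlag P k)

lemma isExposed_face (i : ℕ) : IsExposed ℝ P (F.face i) := by
  rcases lt_or_ge i k with hi | hi
  · exact F.exposed i hi
  · rw [F.top i hi]

lemma monotone_face : Monotone F.face := by
  intro i j hij
  rcases hij.lt_or_eq with hij | rfl
  · rcases lt_or_ge j k with hj | hj
    · exact F.chain i j hij hj
    · rw [F.top j hj]
      exact (F.isExposed_face i).subset
  · exact subset_rfl

lemma isExposed_face_of_le {i j : ℕ} (hij : i ≤ j) : IsExposed ℝ (F.face j) (F.face i) :=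
  (F.isExposed_face i).mono (F.isExposed_face j).subset (F.monotone_face hij)

lemma sdim_face (hP : sdim P = k) {i : ℕ} (hi : i ≤ k) : sdim (F.face i) = i := by
  rcases hi.lt_or_eq with hi | rfl
  · exact F.dim_eq i hi
  · rw [F.top i le_rfl, hP]

structure IsTransverse (j : ℕ) (G : Set (Euc d)) : Prop where
  isExposed : IsExposed ℝ (F.face (j + 1)) G
  sdim_eq : sdim G = j
  face_zero_subset : F.face 0 ⊆ G
  sdim_inter : ∀ i < j, sdim (F.face (i + 1) ∩ G) = i

variable {F}

lemma isTransverse_zero (hk : 0 < k) : F.IsTransverse 0 (F.face 0) :=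
  ⟨F.isExposed_face_of_le zero_le_one, F.dim_eq 0 hk, subset_rfl,
    fun i hi => absurd hi (Nat.not_lt_zero i)⟩

lemma IsTransverse.succ {j : ℕ} {R G : Set (Euc d)} (hR : F.IsTransverse j R) (hj : j + 1 < k)
    (hG : IsExposed ℝ (F.face (j + 2)) G) (hGdim : sdim G = j + 1) (hRG : R ⊆ G)
    (hGF : G ≠ F.face (j + 1)) : F.IsTransverse (j + 1) G := by
  obtain ⟨hRexp, hRdim, hR₀, hRint⟩ := hR
  have hFdim := F.dim_eq (j + 1) hj
  have hinter : F.face (j + 1) ∩ G = R :=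
    (F.isExposed_face_of_le (by omega)).inter_eq_of_ne hG (Ne.symm hGF) (by rw [hFdim, hGdim])
      hRexp ((F.nonempty 0 (by omega)).mono hR₀) hRG (by rw [hRdim, hFdim])
  refine ⟨hG, hGdim, hR₀.trans hRG, fun i hi => ?_⟩
  have hiG : F.face (i + 1) ∩ G = F.face (i + 1) ∩ R := by
    rw [← hinter, ← Set.inter_assoc, Set.inter_eq_left.2 (F.monotone_face (by omega))]
  rw [hiG]
  rcases (by omega : i < j ∨ i = j) with hi | rfl
  · exact hRint i hi
  · rw [Set.inter_eq_right.2 hRexp.subset, hRdim]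

lemma IsTransverse.inter_face {j : ℕ} {G : Set (Euc d)} (hG : F.IsTransverse (j + 1) G) :
    F.IsTransverse j (F.face (j + 1) ∩ G) := by
  obtain ⟨hGexp, -, hG₀, hGint⟩ := hG
  refine ⟨((F.isExposed_face_of_le (Nat.le_succ _)).inter hGexp).mono
      (F.monotone_face (Nat.le_succ _)) Set.inter_subset_left, hGint j (by omega),
    Set.subset_inter (F.monotone_face (Nat.zero_le _)) hG₀, fun i hi => ?_⟩
  rw [← Set.inter_assoc, Set.inter_eq_left.2 (F.monotone_face (by omega))]
  exact hGint i (by omega)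

lemma IsTransverse.ne_face {j : ℕ} {G : Set (Euc d)} (hG : F.IsTransverse (j + 1) G) :
    G ≠ F.face (j + 1) := by
  rintro rfl
  have := hG.sdim_inter j (by omega)
  rw [Set.inter_self, hG.sdim_eq] at this
  omega

lemma IsTransverse.unique (hk : 0 < k) (hP : sdim P = k) {j : ℕ} (hj : j < k) {G G' : Set (Euc d)}
    (hG : F.IsTransverse j G) (hG' : F.IsTransverse j G') : G = G' := by
  obtain ⟨x₀, hx₀⟩ := F.nonempty 0 hk
  induction j generalizing G G' with
  | zero =>
    rw [(Set.Subsingleton.of_sdim_eq_zero hG.sdim_eq).eq_singleton_of_mem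
        (hG.face_zero_subset hx₀),
      (Set.Subsingleton.of_sdim_eq_zero hG'.sdim_eq).eq_singleton_of_mem
        (hG'.face_zero_subset hx₀)]
  | succ j ih =>
    have hR : F.face (j + 1) ∩ G = F.face (j + 1) ∩ G' :=
      ih (by omega) hG.inter_face hG'.inter_face
    by_contra hGG'
    refine not_injective_of_ridge_subset (F := ![G, G', F.face (j + 1)])
      (P := F.face (j + 2)) (R := F.face (j + 1) ∩ G) ?_ ?_
      ⟨x₀, hG.inter_face.face_zero_subset hx₀⟩ ?_
      (by rw [hG.inter_face.sdim_eq, F.sdim_face hP (by omega)]) ?_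
    · intro i
      fin_cases i
      exacts [hG.isExposed, hG'.isExposed, F.isExposed_face_of_le (Nat.le_succ _)]
    · intro i
      fin_cases i <;>
        simp [F.sdim_face hP (by omega : j + 2 ≤ k), hG.sdim_eq, hG'.sdim_eq, F.dim_eq (j + 1) hj]
    · intro i
      fin_cases i
      exacts [Set.inter_subset_right, hR ▸ Set.inter_subset_right, Set.inter_subset_left]
    · have hGF := hG.ne_face
      have hG'F := hG'.ne_face
      simp [Function.Injective, Fin.forall_fin_succ, hGG', hGF, hG'F, Ne.symm hGG', hGF.symm,
        hG'F.symm]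

variable (F) in
lemma exists_isTransverse (hP : IsPolytope P) (hPk : sdim P = k) {j : ℕ} (hj : j < k) :
    ∃ G, F.IsTransverse j G := by
  induction j with
  | zero => exact ⟨_, isTransverse_zero hj⟩
  | succ j ih =>
    obtain ⟨R, hR⟩ := ih (by omega)
    have hFdim := F.dim_eq (j + 1) hj
    obtain ⟨G, hGexp, hGdim, hRG, hGF⟩ := exists_isExposed_ne_of_ridge
      (hP.of_isExposed (F.isExposed_face (j + 2))) (F.isExposed_face_of_le (Nat.le_succ _))
      hR.isExposed ((F.nonempty 0 (by omega)).mono hR.face_zero_subset)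
      (by rw [hR.sdim_eq, hFdim])
      (by rw [hFdim, F.sdim_face hPk (by omega)])
    exact ⟨G, hR.succ hj hGexp (by rw [hGdim, hFdim]) hRG hGF⟩

end FullFlag

lemma facetFlagProp_iff_isTransverse {d : ℕ} (hd : 1 ≤ d) {P G : Set (Euc d)}
    {F : FullFlag P d} : FacetFlagProp P F G ↔ F.IsTransverse (d - 1) G := by
  have hface : F.face (d - 1 + 1) = P := by rw [Nat.sub_add_cancel hd, F.top d le_rfl]
  constructor
  · rintro ⟨hGexp, -, hGdim, hG₀, FG, hFG⟩
    exact ⟨by rwa [hface], hGdim, hG₀, fun i hi => hFG i hi ▸ FG.dim_eq i hi⟩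
  · rintro ⟨hGexp, hGdim, hG₀, hGint⟩
    rw [hface] at hGexp
    have hF₀G : ∀ i, F.face 0 ⊆ F.face i ∩ G := fun i =>
      Set.subset_inter (F.monotone_face (Nat.zero_le i)) hG₀
    refine ⟨hGexp, (F.nonempty 0 hd).mono hG₀, hGdim, hG₀,
      ⟨⟨fun i => if i < d - 1 then F.face (i + 1) ∩ G else G, fun i hi => ?_, fun i hi => ?_,
        fun i hi => ?_, fun i j hij hj => ?_, fun i hi => if_neg (by omega)⟩,
      fun i hi => if_pos hi⟩⟩
    · rw [if_pos hi]
      exact ((F.isExposed_face _).inter hGexp).mono hGexp.subset Set.inter_subset_right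
    · rw [if_pos hi]
      exact (F.nonempty 0 hd).mono (hF₀G _)
    · rw [if_pos hi]
      exact hGint i hi
    · rw [if_pos hj, if_pos (hij.trans hj)]
      exact Set.inter_subset_inter_left _ (F.monotone_face (by omega))

-- `H k` is the flag `r_k ⋯ r_1 (H 0)`.
def IsFlipSequence {d : ℕ} {P : Set (Euc d)} (H : ℕ → FullFlag P d) : Prop :=
  ∀ k, 1 ≤ k → k < d →
    (H k).face k ≠ (H (k - 1)).face k ∧ ∀ m, m ≠ k → (H k).face m = (H (k - 1)).face m

namespace IsFlipSequence

variable {d : ℕ} {P : Set (Euc d)} {F : FullFlag P d} {H : ℕ → FullFlag P d}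

lemma face_eq_of_lt (hH : IsFlipSequence H) (hH₀ : H 0 = F) {j m : ℕ} (hj : j < d)
    (hjm : j < m) : (H j).face m = F.face m := by
  induction j with
  | zero => rw [hH₀]
  | succ j ih =>
    rw [(hH (j + 1) (by omega) hj).2 m (by omega), Nat.add_sub_cancel, ih (by omega) (by omega)]

lemma isTransverse (hH : IsFlipSequence H) (hH₀ : H 0 = F) {j : ℕ} (hj : j < d) :
    F.IsTransverse j ((H j).face j) := by
  induction j with
  | zero => exact hH₀ ▸ FullFlag.isTransverse_zero hj
  | succ j ih =>
    obtain ⟨hne, heq⟩ := hH (j + 1) (by omega) hj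
    rw [Nat.add_sub_cancel] at hne heq
    have hRG : (H j).face j ⊆ (H (j + 1)).face (j + 1) :=
      heq j (by omega) ▸ (H (j + 1)).monotone_face (Nat.le_succ j)
    have hG : IsExposed ℝ (F.face (j + 2)) ((H (j + 1)).face (j + 1)) :=
      hH.face_eq_of_lt hH₀ (m := j + 2) hj (by omega) ▸
        (H (j + 1)).isExposed_face_of_le (Nat.le_succ _)
    exact (ih (by omega)).succ hj hG ((H (j + 1)).dim_eq _ hj) hRG
      (hH.face_eq_of_lt hH₀ (j := j) (m := j + 1) (by omega) (by omega) ▸ hne)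

end IsFlipSequence

/-- There is a unique facet `G` of `P` containing `F_0` such that `(F_i ∩ G)_i` is a full
flag of `G`; moreover `G` is the `(d-1)`-face of the flag `r_{d-1} ⋯ r_1 F`. -/
theorem stmt_7 {d : ℕ} (hd : 1 ≤ d) (P : Set (Euc d)) (hP : IsPolytope P) (hPd : sdim P = d)
    (F : FullFlag P d) :
    (∃! G : Set (Euc d), FacetFlagProp P F G) ∧
    ∀ H : ℕ → FullFlag P d, H 0 = F →
      (∀ k, 1 ≤ k → k < d →
        (H k).face k ≠ (H (k - 1)).face k ∧ ∀ m, m ≠ k → (H k).face m = (H (k - 1)).face m) →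
      FacetFlagProp P F ((H (d - 1)).face (d - 1)) := by
  simp only [facetFlagProp_iff_isTransverse hd]
  obtain ⟨G, hG⟩ := F.exists_isTransverse hP hPd (by omega : d - 1 < d)
  exact ⟨⟨G, hG, fun G' hG' => hG'.unique hd hPd (by omega) hG⟩,
    fun H hH₀ hH => IsFlipSequence.isTransverse hH hH₀ (by omega)⟩
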